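/- arXiv:1611.01627 — 4 statements merged into one kernel-verified Lean document; each statement's English description precedes it below -/
import Mathlib

section
/- Every nonempty closed convex set K in a Banach space E is an L-retract: for every ε > 0 there is a retraction r : E → K with ‖r(x) − x‖ ≤ (1+ε) d_K(x) for all x ∈ E. -/
open Metric Filter Topology

theorem closed_convex_is_L_retract {E : Type*} [NormedAddCommGroup E]
    [NormedSpace ℝ E] [CompleteSpace E] (K : Set E) (hne : K.Nonempty)
    (hK : IsClosed K) (hconv : Convex ℝ K) (ε : ℝ) (hε : 0 < ε) :
    ∃ r : E → E, Continuous r ∧ (∀ x, r x ∈ K) ∧ (∀ x ∈ K, r x = x) ∧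
      ∀ x, ‖r x - x‖ ≤ (1 + ε) * Metric.infDist x K := by
  classical
  set t : ↥(Kᶜ) → Set E := fun u => {y ∈ K | ‖y - ↑u‖ ≤ (1 + ε) * infDist (↑u) K} with ht_def
  have ht : ∀ u, Convex ℝ (t u) := by
    intro u
    have : t u = K ∩ {y | ‖y - ↑u‖ ≤ (1 + ε) * infDist (↑u) K} := rfl
    rw [this]
    refine hconv.inter ?_
    have : {y : E | ‖y - ↑u‖ ≤ (1 + ε) * infDist (↑u) K}
        = Metric.closedBall (↑u) ((1 + ε) * infDist (↑u) K) := by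
      ext y; simp [Metric.mem_closedBall, dist_eq_norm]
    rw [this]
    exact convex_closedBall _ _
  have Hloc : ∀ u : ↥(Kᶜ), ∃ c : E, ∀ᶠ v in 𝓝 u, c ∈ t v := by
    intro u
    have hd : 0 < infDist (↑u) K := by
      exact (hK.notMem_iff_infDist_pos hne).mp u.2
    have hlt : infDist (↑u) K < (1 + ε / 2) * infDist (↑u) K := by
      nlinarith
    obtain ⟨c, hcK, hc⟩ := (Metric.infDist_lt_iff hne).mp hlt
    refine ⟨c, ?_⟩
    have hcont : ContinuousAt (fun v : ↥(Kᶜ) =>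
        (1 + ε) * infDist (↑v) K - ‖c - ↑v‖) u := by
      exact ((continuous_const.mul ((Metric.continuous_infDist_pt K).comp continuous_subtype_val)).sub
        ((continuous_const.sub continuous_subtype_val).norm)).continuousAt
    have hpos : 0 < (1 + ε) * infDist (↑u) K - ‖c - ↑u‖ := by
      have : ‖c - ↑u‖ = dist (↑u) c := by rw [dist_eq_norm, norm_sub_rev]
      nlinarith [this ▸ hc]
    filter_upwards [hcont.eventually (eventually_gt_nhds hpos)] with v hv
    exact ⟨hcK, by linarith⟩
  obtain ⟨g, hg⟩ := exists_continuous_forall_mem_convex_of_local_const ht Hloc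
  set r : E → E := fun x => if h : x ∈ K then x else g ⟨x, h⟩ with hr_def
  have hrK : ∀ x, r x ∈ K := by
    intro x
    by_cases h : x ∈ K
    · simp [r, h]
    · simpa [r, h] using (hg ⟨x, h⟩).1
  have hrid : ∀ x ∈ K, r x = x := fun x h => by simp [r, h]
  have hbound : ∀ x, ‖r x - x‖ ≤ (1 + ε) * infDist x K := by
    intro x
    by_cases h : x ∈ K
    · simp only [r, dif_pos h, sub_self, norm_zero]
      have := Metric.infDist_nonneg (x := x) (s := K)
      nlinarith
    · simpa [r, h] using (hg ⟨x, h⟩).2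
  refine ⟨r, ?_, hrK, hrid, hbound⟩
  rw [continuous_iff_continuousAt]
  intro x₀
  by_cases h₀ : x₀ ∈ K
  · -- squeeze
    rw [ContinuousAt, show r x₀ = x₀ from hrid x₀ h₀]
    rw [tendsto_iff_norm_sub_tendsto_zero]
    have key : ∀ y, ‖r y - x₀‖ ≤ (2 + ε) * ‖y - x₀‖ := by
      intro y
      have h1 : ‖r y - x₀‖ ≤ ‖r y - y‖ + ‖y - x₀‖ := norm_sub_le_norm_sub_add_norm_sub _ _ _
      have h2 : infDist y K ≤ ‖y - x₀‖ := by
        have := Metric.infDist_le_dist_of_mem (x := y) h₀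
        rwa [dist_eq_norm] at this
      have h3 := hbound y
      nlinarith [norm_nonneg (y - x₀)]
    have hlim : Tendsto (fun y => (2 + ε) * ‖y - x₀‖) (𝓝 x₀) (𝓝 0) := by
      have : Tendsto (fun y : E => ‖y - x₀‖) (𝓝 x₀) (𝓝 0) := by
        simpa using tendsto_iff_norm_sub_tendsto_zero.mp (tendsto_id (x := 𝓝 x₀))
      simpa using this.const_mul (2 + ε)
    exact squeeze_zero (fun y => norm_nonneg _) key hlim
  · have hUopen : IsOpen Kᶜ := hK.isOpen_compl
    have hco : ContinuousOn r Kᶜ := by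
      rw [continuousOn_iff_continuous_restrict]
      have : Kᶜ.domRestrict r = fun v : ↥(Kᶜ) => g v := by
        funext v
        simp only [Set.domRestrict_apply, r]
        rw [dif_neg v.2]
      rw [this]
      exact g.continuous
    exact hco.continuousAt (hUopen.mem_nhds h₀)
end

section
/- Let E = ℓ², D₁ = {x ∈ ℓ² : ‖x‖ ≤ 1/√2}, and f : D₁ → D₁ defined by f(x) = (√(1/2 − ‖x‖²), x₁, x₂, ...). Then f is continuous, ‖f(x)‖ = 1/√2 for all x ∈ D₁, and f has no fixed point and no zero. -/
open scoped ENNReal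

lemma norm_sq_shift (z w : lp (fun _ : ℕ => ℝ) 2) (c : ℝ)
    (h0 : (z : ℕ → ℝ) 0 = c) (hs : ∀ n, (z : ℕ → ℝ) (n + 1) = (w : ℕ → ℝ) n) :
    ‖z‖ ^ 2 = c ^ 2 + ‖w‖ ^ 2 := by
  have hp : 0 < (2 : ℝ≥0∞).toReal := by norm_num
  have hz := lp.norm_rpow_eq_tsum hp z
  have hw := lp.norm_rpow_eq_tsum hp w
  have hsum : Summable (fun n => ‖(z : ℕ → ℝ) n‖ ^ (2:ℝ≥0∞).toReal) :=
    (lp.memℓp z).summable hp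
  have h1 : ∑' n, ‖(z : ℕ → ℝ) n‖ ^ (2:ℝ≥0∞).toReal
      = ‖(z : ℕ → ℝ) 0‖ ^ (2:ℝ≥0∞).toReal + ∑' n, ‖(z : ℕ → ℝ) (n+1)‖ ^ (2:ℝ≥0∞).toReal :=
    Summable.tsum_eq_zero_add hsum
  have h2 : (fun n => ‖(z : ℕ → ℝ) (n+1)‖ ^ (2:ℝ≥0∞).toReal)
      = fun n => ‖(w : ℕ → ℝ) n‖ ^ (2:ℝ≥0∞).toReal := by
    funext n; rw [hs]
  rw [h2] at h1
  have : ‖z‖ ^ (2:ℝ≥0∞).toReal = ‖(z : ℕ → ℝ) 0‖ ^ (2:ℝ≥0∞).toReal + ‖w‖ ^ (2:ℝ≥0∞).toReal := by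
    rw [hz, h1, hw]
  have h2r : (2:ℝ≥0∞).toReal = ((2:ℕ):ℝ) := by norm_num
  rw [h2r] at this
  simp only [Real.rpow_natCast] at this
  rw [this, h0]
  simp [sq_abs]

/-- Kakutani-type map on the ball of radius `1/√2` in `ℓ²`: it has no zeros and
no fixed points although it is continuous and tangent-like on the sphere. -/
theorem kakutani_map_no_fixed_point_no_zero
    (f : lp (fun _ : ℕ => ℝ) 2 → lp (fun _ : ℕ => ℝ) 2)
    (hf0 : ∀ x, ‖x‖ ≤ 1 / Real.sqrt 2 → (f x : ℕ → ℝ) 0 = Real.sqrt (1/2 - ‖x‖^2))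
    (hfs : ∀ x, ‖x‖ ≤ 1 / Real.sqrt 2 → ∀ n : ℕ, (f x : ℕ → ℝ) (n + 1) = (x : ℕ → ℝ) n) :
    ContinuousOn f {x | ‖x‖ ≤ 1 / Real.sqrt 2} ∧
    (∀ x, ‖x‖ ≤ 1 / Real.sqrt 2 → ‖f x‖ = 1 / Real.sqrt 2) ∧
    (∀ x, ‖x‖ ≤ 1 / Real.sqrt 2 → f x ≠ 0) ∧
    (∀ x, ‖x‖ ≤ 1 / Real.sqrt 2 → f x ≠ x) := by
  have hsqrt2 : (0:ℝ) < Real.sqrt 2 := Real.sqrt_pos.2 (by norm_num)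
  have hball : ∀ x : lp (fun _ : ℕ => ℝ) 2, ‖x‖ ≤ 1 / Real.sqrt 2 → ‖x‖^2 ≤ 1/2 := by
    intro x hx
    have h2 : (1 / Real.sqrt 2) ^ 2 = 1/2 := by
      rw [div_pow, one_pow, Real.sq_sqrt (by norm_num : (2:ℝ) ≥ 0)]
    calc ‖x‖^2 ≤ (1 / Real.sqrt 2)^2 := by
          apply pow_le_pow_left₀ (norm_nonneg _) hx 2
      _ = 1/2 := h2
  have hnorm : ∀ x, ‖x‖ ≤ 1 / Real.sqrt 2 → ‖f x‖ = 1 / Real.sqrt 2 := by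
    intro x hx
    have hsq : ‖f x‖^2 = (Real.sqrt (1/2 - ‖x‖^2))^2 + ‖x‖^2 :=
      norm_sq_shift (f x) x _ (hf0 x hx) (hfs x hx)
    rw [Real.sq_sqrt (by linarith [hball x hx])] at hsq
    have : ‖f x‖^2 = 1/2 := by linarith
    have h1 : ‖f x‖ = Real.sqrt (1/2) := by
      rw [← Real.sqrt_sq (norm_nonneg (f x)), this]
    rw [h1, show (1:ℝ)/2 = 2⁻¹ by norm_num, Real.sqrt_inv, one_div]
  refine ⟨?_, hnorm, ?_, ?_⟩
  · -- continuity
    intro x hx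
    have hx' : ‖x‖ ≤ 1 / Real.sqrt 2 := hx
    set S : Set (lp (fun _ : ℕ => ℝ) 2) := {x | ‖x‖ ≤ 1 / Real.sqrt 2}
    set F : lp (fun _ : ℕ => ℝ) 2 → ℝ := fun y =>
      Real.sqrt ((Real.sqrt (1/2 - ‖y‖^2) - Real.sqrt (1/2 - ‖x‖^2))^2 + ‖y - x‖^2) with hF
    have hFc : Continuous F := by
      apply Real.continuous_sqrt.comp
      apply Continuous.add
      · apply Continuous.pow
        apply Continuous.sub _ continuous_const
        exact Real.continuous_sqrt.comp (continuous_const.sub (continuous_norm.pow 2))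
      · exact (continuous_norm.comp (continuous_id.sub continuous_const)).pow 2
    have hFx : F x = 0 := by simp [hF]
    have heq : ∀ y ∈ S, dist (f y) (f x) = F y := by
      intro y hy
      have hsq : ‖f y - f x‖^2 =
          (Real.sqrt (1/2 - ‖y‖^2) - Real.sqrt (1/2 - ‖x‖^2))^2 + ‖y - x‖^2 := by
        apply norm_sq_shift (f y - f x) (y - x)
        · rw [lp.coeFn_sub, Pi.sub_apply, hf0 y hy, hf0 x hx']
        · intro n
          rw [lp.coeFn_sub, Pi.sub_apply, hfs y hy n, hfs x hx' n, lp.coeFn_sub, Pi.sub_apply]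
      rw [dist_eq_norm, ← Real.sqrt_sq (norm_nonneg (f y - f x)), hsq]
    rw [ContinuousWithinAt, tendsto_iff_dist_tendsto_zero]
    have : Filter.Tendsto F (nhdsWithin x S) (nhds 0) := by
      rw [← hFx]
      exact (hFc.continuousWithinAt).tendsto
    refine this.congr' ?_
    filter_upwards [self_mem_nhdsWithin] with y hy
    exact (heq y hy).symm
  · -- no zero
    intro x hx h
    have h1 := hnorm x hx
    rw [h, norm_zero] at h1
    have hp : (0:ℝ) < 1 / Real.sqrt 2 := by positivity
    linarith
  · -- no fixed point
    intro x hx h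
    have h0 : (x : ℕ → ℝ) 0 = Real.sqrt (1/2 - ‖x‖^2) := by
      rw [← hf0 x hx, h]
    have hs : ∀ n, (x : ℕ → ℝ) (n+1) = (x : ℕ → ℝ) n := by
      intro n; rw [← hfs x hx n, h]
    have hconst : ∀ n, (x : ℕ → ℝ) n = (x : ℕ → ℝ) 0 := by
      intro n; induction n with
      | zero => rfl
      | succ k ih => rw [hs k, ih]
    have hsum : Summable (fun n => ‖(x : ℕ → ℝ) n‖ ^ (2:ℝ≥0∞).toReal) :=
      (lp.memℓp x).summable (by norm_num)
    have htend := hsum.tendsto_atTop_zero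
    have hconst' : (fun n => ‖(x : ℕ → ℝ) n‖ ^ (2:ℝ≥0∞).toReal)
        = fun _ => ‖(x : ℕ → ℝ) 0‖ ^ (2:ℝ≥0∞).toReal := by
      funext n; rw [hconst n]
    rw [hconst'] at htend
    have hz : ‖(x : ℕ → ℝ) 0‖ ^ (2:ℝ≥0∞).toReal = 0 :=
      tendsto_nhds_unique tendsto_const_nhds htend
    have hx0 : (x : ℕ → ℝ) 0 = 0 := by
      have h2 : (2:ℝ≥0∞).toReal = ((2:ℕ):ℝ) := by norm_num
      rw [h2, Real.rpow_natCast] at hz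
      have := pow_eq_zero_iff (n := 2) (by norm_num) |>.1 hz
      simpa using this
    have hxzero : x = 0 := by
      apply lp.ext
      funext n
      rw [hconst n, hx0]; rfl
    rw [hxzero] at h0
    simp only [norm_zero] at h0
    have hc : ((0 : lp (fun _ : ℕ => ℝ) 2) : ℕ → ℝ) 0 = 0 := rfl
    rw [hc] at h0
    have hp : (0:ℝ) < Real.sqrt (1/2 - 0^2) := Real.sqrt_pos.2 (by norm_num)
    rw [← h0] at hp
    exact lt_irrefl 0 hp
end

section
/- Let A generate a C₀-semigroup {S(t)} on a Banach space E with growth bound ω, and K ⊆ E closed with J_h(K) ⊆ K for all small h > 0 (hω < 1). Then S(t)K ⊆ K for all t ≥ 0. -/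
/-- If a closed set `K` is invariant under the resolvents `J_h` for all small
`h > 0`, then it is invariant under the semigroup (via the Post–Widder
exponential formula). -/
theorem semigroup_invariance_of_resolvent_invariance {E : Type*}
    [NormedAddCommGroup E] [NormedSpace ℝ E] [CompleteSpace E]
    (S : ℝ → E →L[ℝ] E) (hS0 : S 0 = ContinuousLinearMap.id ℝ E)
    (ω : ℝ) (J : ℝ → E → E)
    (hPW : ∀ (x : E) (t : ℝ), 0 < t →
      Filter.Tendsto (fun n : ℕ => (J (t / n))^[n] x) Filter.atTop (nhds (S t x)))
    (K : Set E) (hK : IsClosed K)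
    (hres : ∀ h : ℝ, 0 < h → h * ω < 1 → ∀ x ∈ K, J h x ∈ K) :
    ∀ t : ℝ, 0 ≤ t → ∀ x ∈ K, S t x ∈ K := by
  intro t ht x hx
  rcases eq_or_lt_of_le ht with h0 | htpos
  · rw [← h0, hS0]; exact hx
  · refine hK.mem_of_tendsto (hPW x t htpos) ?_
    rw [Filter.eventually_atTop]
    obtain ⟨N, hN⟩ := exists_nat_gt (t * ω)
    refine ⟨max N 1, fun n hn => ?_⟩
    have hn1 : 1 ≤ n := le_trans (le_max_right N 1) hn
    have hnpos : (0 : ℝ) < n := by exact_mod_cast hn1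
    have hpos : 0 < t / n := div_pos htpos hnpos
    have hsmall : (t / n) * ω < 1 := by
      rw [div_mul_eq_mul_div, div_lt_one hnpos]
      calc t * ω < N := hN
        _ ≤ n := by exact_mod_cast le_trans (le_max_left N 1) hn
    have key : ∀ m : ℕ, (J (t / n))^[m] x ∈ K := by
      intro m
      induction m with
      | zero => simpa using hx
      | succ k ih =>
        rw [Function.iterate_succ_apply']
        exact hres _ hpos hsmall _ ih
    exact key n
end

section
/- Let E be a Banach space, K ⊆ E closed convex, j : E₀ → E continuous linear with a convex subset K₀ ⊆ E₀, j(K₀) ⊆ K, and f : K₀ → E continuous with f(u) ∈ T_K(j(u)) for all u ∈ K₀. Then for every u ∈ K₀: lim_{h→0⁺, v→u, v∈K₀} d_K(j(v) + h f(v))/h = 0. -/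
open Pointwise

/-- The Bouligand contingent cone of `K` at `x`. -/
def contingentCone {E : Type*} [NormedAddCommGroup E] [NormedSpace ℝ E]
    (K : Set E) (x : E) : Set E :=
  {v : E | Filter.liminf (fun h : ℝ => Metric.infDist (x + h • v) K / h)
      (nhdsWithin 0 (Set.Ioi 0)) = 0}

/-- Convexity gives monotonicity of `h ↦ d_K(a + h w)/h` when `a ∈ K`. -/
lemma infDist_add_smul_le_aux {E : Type*} [NormedAddCommGroup E] [NormedSpace ℝ E]
    {K : Set E} (hconv : Convex ℝ K) {a : E} (ha : a ∈ K) (w : E) {h h₀ : ℝ}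
    (hh : 0 < h) (hle : h ≤ h₀) :
    Metric.infDist (a + h • w) K ≤ (h / h₀) * Metric.infDist (a + h₀ • w) K := by
  have hh₀ : 0 < h₀ := hh.trans_le hle
  set t : ℝ := h / h₀ with ht
  have ht0 : 0 < t := div_pos hh hh₀
  have ht1 : t ≤ 1 := (div_le_one hh₀).2 hle
  have hne : K.Nonempty := ⟨a, ha⟩
  refine le_of_forall_pos_le_add fun ε hε => ?_
  obtain ⟨k, hkK, hk⟩ := (Metric.infDist_lt_iff hne).1
    (lt_add_of_pos_right (Metric.infDist (a + h₀ • w) K) hε)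
  have hmem : (1 - t) • a + t • k ∈ K :=
    hconv ha hkK (by linarith) ht0.le (by ring)
  have hth : t * h₀ = h := div_mul_cancel₀ h hh₀.ne'
  have hdist : dist (a + h • w) ((1 - t) • a + t • k) = t * dist (a + h₀ • w) k := by
    rw [dist_eq_norm, dist_eq_norm, show a + h • w - ((1 - t) • a + t • k)
      = t • (a + h₀ • w - k) by rw [← hth]; module, norm_smul, Real.norm_eq_abs,
      abs_of_pos ht0]
  calc Metric.infDist (a + h • w) K ≤ dist (a + h • w) ((1 - t) • a + t • k) :=
        Metric.infDist_le_dist_of_mem hmem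
    _ = t * dist (a + h₀ • w) k := hdist
    _ ≤ t * (Metric.infDist (a + h₀ • w) K + ε) := by nlinarith
    _ ≤ t * Metric.infDist (a + h₀ • w) K + ε := by nlinarith

/-- Lemma 3.3: uniform tangency along `K₀`. -/
theorem uniform_tangency {E E₀ : Type*} [NormedAddCommGroup E] [NormedSpace ℝ E]
    [NormedAddCommGroup E₀] [NormedSpace ℝ E₀]
    (K : Set E) (hK : IsClosed K) (hconv : Convex ℝ K)
    (j : E₀ →L[ℝ] E) (K₀ : Set E₀) (hK₀ : Convex ℝ K₀) (hjK : j '' K₀ ⊆ K)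
    (f : E₀ → E) (hf : ContinuousOn f K₀)
    (htan : ∀ u ∈ K₀, f u ∈ contingentCone K (j u)) :
    ∀ u ∈ K₀,
      Filter.Tendsto (fun p : E₀ × ℝ => Metric.infDist (j p.1 + p.2 • f p.1) K / p.2)
        ((nhdsWithin u K₀) ×ˢ (nhdsWithin 0 (Set.Ioi 0))) (nhds 0) := by
  intro u hu
  rw [Metric.tendsto_nhds]
  intro ε hε
  set L := nhdsWithin (0 : ℝ) (Set.Ioi 0) with hL
  -- find h₀ > 0 with small relative distance
  have hliminf := htan u hu
  have hfreq : ∃ h₀ : ℝ, 0 < h₀ ∧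
      Metric.infDist (j u + h₀ • f u) K / h₀ < ε / 4 := by
    by_contra hcon
    push_neg at hcon
    have hev : ∀ᶠ h in L, ε / 4 ≤ Metric.infDist (j u + h • f u) K / h := by
      filter_upwards [self_mem_nhdsWithin] with h hh
      exact hcon h hh
    have hbd : ∀ᶠ h in L, Metric.infDist (j u + h • f u) K / h ≤ ‖f u‖ := by
      filter_upwards [self_mem_nhdsWithin] with h hh
      have hjuK : j u ∈ K := hjK ⟨u, hu, rfl⟩
      have : Metric.infDist (j u + h • f u) K ≤ h * ‖f u‖ := by
        calc Metric.infDist (j u + h • f u) K ≤ dist (j u + h • f u) (j u) :=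
              Metric.infDist_le_dist_of_mem hjuK
          _ = h * ‖f u‖ := by
              rw [dist_eq_norm, add_sub_cancel_left, norm_smul, Real.norm_eq_abs,
                abs_of_pos hh]
      rw [div_le_iff₀ hh]
      linarith
    have hco : Filter.IsCoboundedUnder (· ≥ ·) L
        (fun h : ℝ => Metric.infDist (j u + h • f u) K / h) :=
      Filter.isCoboundedUnder_ge_of_eventually_le L hbd
    have := Filter.le_liminf_of_le hco hev
    rw [hliminf] at this
    linarith
  obtain ⟨h₀, hh₀, hA⟩ := hfreq
  set A := Metric.infDist (j u + h₀ • f u) K with hAdef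
  have hA' : A < ε / 4 * h₀ := by
    rw [div_lt_iff₀ hh₀] at hA; exact hA
  -- eventual sets
  have hev1 : ∀ᶠ v in nhdsWithin u K₀, ‖j v - j u‖ < ε / 4 * h₀ := by
    have : Filter.Tendsto (fun v => ‖j v - j u‖) (nhdsWithin u K₀) (nhds 0) := by
      have h1 : Filter.Tendsto j (nhdsWithin u K₀) (nhds (j u)) :=
        (j.continuous.tendsto u).mono_left nhdsWithin_le_nhds
      have := (h1.sub_const (j u)).norm
      simpa using this
    have := this.eventually_lt_const (by positivity : (0:ℝ) < ε / 4 * h₀)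
    simpa using this
  have hev2 : ∀ᶠ v in nhdsWithin u K₀, ‖f v - f u‖ < ε / 4 := by
    have : Filter.Tendsto (fun v => ‖f v - f u‖) (nhdsWithin u K₀) (nhds 0) := by
      have := ((hf u hu).tendsto).sub_const (f u)
      simpa using this.norm
    simpa using this.eventually_lt_const (by positivity : (0:ℝ) < ε / 4)
  have hev3 : ∀ᶠ h in L, h ∈ Set.Ioo (0:ℝ) h₀ := by
    have : Set.Iio h₀ ∈ nhds (0:ℝ) := Iio_mem_nhds hh₀
    have h2 : Set.Iio h₀ ∈ L := nhdsWithin_le_nhds this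
    filter_upwards [self_mem_nhdsWithin, h2] with h h1 h2
    exact ⟨h1, h2⟩
  have hevK : ∀ᶠ v in nhdsWithin u K₀, v ∈ K₀ := self_mem_nhdsWithin
  filter_upwards [Filter.Eventually.prod_mk ((hev1.and hev2).and hevK) hev3]
  rintro ⟨v, h⟩ ⟨⟨⟨hjv, hfv⟩, hvK⟩, hh1, hh2⟩
  have hjvK : j v ∈ K := hjK ⟨v, hvK, rfl⟩
  set d := Metric.infDist (j v + h • f v) K with hd
  have hd0 : 0 ≤ d := Metric.infDist_nonneg
  have step1 : d ≤ Metric.infDist (j v + h • f u) K + h * ‖f v - f u‖ := by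
    have := Metric.infDist_le_infDist_add_dist (x := j v + h • f v)
      (y := j v + h • f u) (s := K)
    calc d ≤ Metric.infDist (j v + h • f u) K + dist (j v + h • f v) (j v + h • f u) := this
      _ = Metric.infDist (j v + h • f u) K + h * ‖f v - f u‖ := by
          rw [dist_eq_norm, show j v + h • f v - (j v + h • f u) = h • (f v - f u) by module,
            norm_smul, Real.norm_eq_abs, abs_of_pos hh1]
  have step2 : Metric.infDist (j v + h • f u) K
      ≤ (h / h₀) * Metric.infDist (j v + h₀ • f u) K :=
    infDist_add_smul_le_aux hconv hjvK (f u) hh1 hh2.le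
  have step3 : Metric.infDist (j v + h₀ • f u) K ≤ A + ‖j v - j u‖ := by
    have := Metric.infDist_le_infDist_add_dist (x := j v + h₀ • f u)
      (y := j u + h₀ • f u) (s := K)
    calc Metric.infDist (j v + h₀ • f u) K
        ≤ A + dist (j v + h₀ • f u) (j u + h₀ • f u) := this
      _ = A + ‖j v - j u‖ := by
          rw [dist_eq_norm, show j v + h₀ • f u - (j u + h₀ • f u) = j v - j u by module]
  have hfinal : d < ε * h := by
    have hA0 : 0 ≤ A := Metric.infDist_nonneg
    have hB0 : 0 ≤ ‖j v - j u‖ := norm_nonneg _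
    have hht : h / h₀ * h₀ = h := div_mul_cancel₀ h hh₀.ne'
    have hpos : 0 < h / h₀ := div_pos hh1 hh₀
    nlinarith [mul_le_mul_of_nonneg_left step3 hpos.le, norm_nonneg (f v - f u)]
  rw [Real.dist_eq, sub_zero, abs_of_nonneg (div_nonneg hd0 hh1.le), div_lt_iff₀ hh1]
  linarith
end
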